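/- In the two-state Markov chain with states s, t where s stays at s with probability 1/2 and moves to t with probability 1/2, and t is absorbing, starting from s: (1) for every λ ≥ 1, the probability of the direct fixed window parity objective DFW(λ) (with p(s)=1 and p(t)=0) is strictly less than 1 — in fact the probability of staying in s for at least λ steps is 1/2^{λ-1} > 0; (2) the probability of the direct bounded window objective DBW = ⋃_{λ≥1} DFW(λ) equals 1, since t is reached almost surely in finite time. -/

import Mathlib

open MeasureTheory

/-- Transition matrix of the two-state Markov chain: `s → s` w.p. 1/2,
`s → t` w.p. 1/2, `t` absorbing. -/
noncomputable def P2 : Fin 2 → Fin 2 → ENNReal := ![![1/2, 1/2], ![0, 1]]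

/-!
Staying in `s` for the first `n` steps has probability `(1/2)^n`, which tends to `0`; so the run
stays in `s` forever with probability `0`. Every `DFW(λ)` misses the event of staying in `s` for
`λ` steps, which has positive probability, while `DBW` is exactly the complement of staying in `s`
forever.
-/

def IsRunMeasureFromS (μ : Measure (ℕ → Fin 2)) : Prop :=
  ∀ (n : ℕ) (f : ℕ → Fin 2), f 0 = 0 →
    μ {ρ | ∀ i ≤ n, ρ i = f i} = ∏ i ∈ Finset.range n, P2 (f i) (f (i + 1))

lemma setOf_exists_le_eq_one (n : ℕ) :
    {ρ : ℕ → Fin 2 | ∃ l ≤ n, ρ l = 1} = {ρ | ∀ i ≤ n, ρ i = 0}ᶜ := by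
  ext ρ
  simp only [Set.mem_ofPred_eq, Set.mem_compl_iff, not_forall, exists_prop]
  exact exists_congr fun l => and_congr_right fun _ =>
    ⟨fun h => h ▸ one_ne_zero, Fin.eq_one_of_ne_zero _⟩

lemma iUnion_setOf_exists_le_eq_one :
    ⋃ n ∈ {l : ℕ | 1 ≤ l}, {ρ : ℕ → Fin 2 | ∃ l ≤ n - 1, ρ l = 1} = {ρ | ∀ i, ρ i = 0}ᶜ := by
  ext ρ
  simp only [setOf_exists_le_eq_one, Set.mem_iUnion, Set.mem_compl_iff, Set.mem_ofPred_eq,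
    not_forall]
  exact ⟨fun ⟨_, _, l, _, hl⟩ => ⟨l, hl⟩, fun ⟨l, hl⟩ => ⟨l + 1, by simp, l, le_rfl, hl⟩⟩

section RunMeasure

variable {μ : Measure (ℕ → Fin 2)} (hμ : IsRunMeasureFromS μ)
include hμ

lemma IsRunMeasureFromS.measure_forall_le_eq_zero (n : ℕ) :
    μ {ρ | ∀ i ≤ n, ρ i = 0} = (1 / 2) ^ n := by
  simpa [P2] using hμ n (fun _ => 0) rfl

lemma IsRunMeasureFromS.measure_forall_lt_eq_zero {n : ℕ} (hn : 1 ≤ n) :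
    μ {ρ | ∀ i < n, ρ i = 0} = (1 / 2) ^ (n - 1) := by
  obtain ⟨m, rfl⟩ := Nat.exists_eq_add_of_le' hn
  simpa only [Nat.lt_succ_iff, Nat.add_sub_cancel] using hμ.measure_forall_le_eq_zero m

lemma IsRunMeasureFromS.measure_forall_eq_zero : μ {ρ | ∀ i, ρ i = 0} = 0 := by
  have hle (n : ℕ) : μ {ρ | ∀ i, ρ i = 0} ≤ (1 / 2) ^ n :=
    hμ.measure_forall_le_eq_zero n ▸ measure_mono fun ρ h i _ => h i
  exact le_antisymm
    (ge_of_tendsto' (ENNReal.tendsto_pow_atTop_nhds_zero_of_lt_one (by norm_num)) hle) zero_le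

end RunMeasure

/-- In the two-state chain started at `s` (state 0): for each `λ ≥ 1` the
probability of staying in `s` for at least `λ` steps is `1/2^(λ-1) > 0`, so
`DFW(λ)` (reach `t` within `λ - 1` steps) has probability `< 1`; yet the direct
bounded window objective `DBW = ⋃_{λ≥1} DFW(λ)` has probability 1. -/
theorem dfw_dbw_two_state (μ : Measure (ℕ → Fin 2)) [IsProbabilityMeasure μ]
    (hμ : ∀ (n : ℕ) (f : ℕ → Fin 2), f 0 = 0 →
      μ {ρ | ∀ i ≤ n, ρ i = f i} = ∏ i ∈ Finset.range n, P2 (f i) (f (i + 1))) :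
    (∀ lam : ℕ, 1 ≤ lam →
      μ {ρ | ∀ i < lam, ρ i = 0} = (1/2 : ENNReal) ^ (lam - 1) ∧
      0 < μ {ρ | ∀ i < lam, ρ i = 0} ∧
      μ {ρ | ∃ l, l ≤ lam - 1 ∧ ρ l = 1} < 1) ∧
    μ (⋃ lam ∈ {l : ℕ | 1 ≤ l}, {ρ : ℕ → Fin 2 | ∃ l, l ≤ lam - 1 ∧ ρ l = 1}) = 1 := by
  replace hμ : IsRunMeasureFromS μ := hμ
  have hpos (n : ℕ) : (0 : ENNReal) < (1 / 2) ^ n := ENNReal.pow_pos (by norm_num) n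
  refine ⟨fun lam hlam => ?_, ?_⟩
  · have hdfw : μ {ρ | ∃ l ≤ lam - 1, ρ l = 1} = 1 - (1 / 2) ^ (lam - 1) := by
      rw [setOf_exists_le_eq_one, prob_compl_eq_one_sub (by measurability),
        hμ.measure_forall_le_eq_zero]
    rw [hμ.measure_forall_lt_eq_zero hlam, hdfw]
    exact ⟨rfl, hpos _, ENNReal.sub_lt_self ENNReal.one_ne_top one_ne_zero (hpos _).ne'⟩
  · rw [iUnion_setOf_exists_le_eq_one, prob_compl_eq_one_sub (by measurability),
      hμ.measure_forall_eq_zero, tsub_zero]
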